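/- Let N < d_x, let X_ε ∈ ℝ^{d_x×N} have rank N (so X_εᵀX_ε is invertible), and let Y ∈ ℝ^{d_y×N}. Let d_1 ∈ ℕ, set p := min(d_x, d_1, d_y), and assume either rank(Y) ≤ p or the p-th largest eigenvalue of YYᵀ is strictly greater than its (p+1)-th largest eigenvalue. Then a pair (W_2, W_1) ∈ ℝ^{d_y×d_1} × ℝ^{d_1×d_x} globally minimizes the loss ‖W_2W_1X_ε − Y‖_F² if and only if W_2W_1 = U_pU_pᵀ Y (X_εᵀX_ε)^{-1} X_εᵀ + R for some R ∈ ℝ^{d_y×d_x} with row(R) ⊆ col(X_ε)^⊥. -/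

import Mathlib

open Matrix

noncomputable section

/-- Squared Frobenius norm ‖M‖_F² of a real matrix. -/
def frobSq {m n : ℕ} (M : Matrix (Fin m) (Fin n) ℝ) : ℝ := ∑ i, ∑ j, (M i j) ^ 2

/-- `row(R) ⊆ col(X)^⊥`: every row of `R` is orthogonal to the column space of `X`
(the span of the columns of `X`, i.e. of the rows of `Xᵀ`). -/
def rowsInColPerp {a b c : ℕ} (R : Matrix (Fin a) (Fin b) ℝ)
    (X : Matrix (Fin b) (Fin c) ℝ) : Prop :=
  ∀ i, ∀ v ∈ Submodule.span ℝ (Set.range Xᵀ), ∑ k, R i k * v k = 0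

/-!
Since `X_ε` has full column rank, `W₂W₁X_ε = B` determines `W₂W₁` up to a matrix `R` with
`R X_ε = 0`, i.e. with `row(R) ⊆ col(X_ε)^⊥`. Every product `W₂W₁X_ε` has rank at most `p`, and
`U_pU_pᵀY` is one of them, so the theorem is Eckart–Young with its uniqueness clause: among
matrices `C` of rank at most `p`, `‖C - Y‖_F` is minimal exactly at `C = U_pU_pᵀY`.

In the eigenbasis, `Z = VᵀY` has orthogonal rows `zᵢ` with `‖zᵢ‖² = σᵢ`. Let `P` be the
orthogonal projection onto the row space of `C`, so `tr P ≤ p`. Pythagoras gives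
`‖C - Z‖² = ‖C - ZP‖² + ‖Z‖² - ‖ZP‖²` and `‖ZP‖² = ∑ σᵢ sᵢ` with weights
`sᵢ = ‖P zᵢ‖² / σᵢ ∈ [0, 1]` of total mass at most `tr P ≤ p`. Any level `c ≥ 0` separating
`σ₁, …, σ_p` from the remaining eigenvalues then bounds `∑ σᵢ sᵢ ≤ σ₁ + ⋯ + σ_p`, which is the
inequality. If `c` can be chosen strictly between `σ_p` and `σ_{p+1}` (the gap), or `c = 0`
(the rank condition), equality forces `sᵢ = 1` for `i ≤ p` and `sᵢ = 0` beyond, wherever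
`σᵢ ≠ 0`; that is, `C = ZP` is the truncation of `Z` to its first `p` rows.
-/

namespace Matrix

variable {m n : Type*} [Fintype n]

theorem exists_orthonormal_rows_mul_eq [Fintype m] (C : Matrix m n ℝ) :
    ∃ (r : ℕ) (G : Matrix (Fin r) n ℝ), r ≤ C.rank ∧ G * Gᵀ = 1 ∧ C * Gᵀ * G = C := by
  classical
  let e : (n → ℝ) ≃ₗ[ℝ] EuclideanSpace ℝ n := (WithLp.linearEquiv 2 ℝ (n → ℝ)).symm
  let K := (Submodule.span ℝ (Set.range C.row)).map e.toLinearMap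
  let b := stdOrthonormalBasis ℝ K
  have hinner (x y : K) :
      inner ℝ x y = ∑ k, (x : EuclideanSpace ℝ n) k * (y : EuclideanSpace ℝ n) k := by
    simp [Submodule.coe_inner, PiLp.inner_apply, mul_comm]
  refine ⟨_, of fun i => (b i : EuclideanSpace ℝ n), ?_, ?_, ?_⟩
  · rw [rank_eq_finrank_span_row, ← LinearEquiv.finrank_map_eq e]
  · ext i j
    have := (orthonormal_iff_ite.1 b.orthonormal) i j
    rw [hinner] at this
    simpa only [mul_apply, one_apply, of_apply, transpose_apply] using this
  · ext a k
    have hmem : e (C a) ∈ K := Submodule.mem_map_of_mem (Submodule.subset_span ⟨a, rfl⟩)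
    have hrepr := congrArg (fun v : K => (v : EuclideanSpace ℝ n) k) (b.sum_repr' ⟨_, hmem⟩)
    have he (v : n → ℝ) (l : n) : (e v).ofLp l = v l := rfl
    simp only [hinner, Submodule.coe_sum, Submodule.coe_smul, WithLp.ofLp_sum, WithLp.ofLp_smul,
      Finset.sum_apply, Pi.smul_apply, smul_eq_mul, he] at hrepr
    rw [← hrepr]
    simp only [mul_apply, transpose_apply, of_apply, Finset.sum_mul, mul_comm (C a _)]

theorem exists_isSymm_isIdempotentElem_mul_eq_self [Fintype m] (C : Matrix m n ℝ) :
    ∃ P : Matrix n n ℝ, P.IsSymm ∧ IsIdempotentElem P ∧ C * P = C ∧ P.trace ≤ C.rank := by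
  obtain ⟨r, G, hr, hG, hCG⟩ := exists_orthonormal_rows_mul_eq C
  refine ⟨Gᵀ * G, ?_, ?_, by rw [← Matrix.mul_assoc, hCG], ?_⟩
  · simp [IsSymm, transpose_mul]
  · rw [IsIdempotentElem, Matrix.mul_assoc, ← Matrix.mul_assoc G, hG, Matrix.one_mul]
  · rw [trace_mul_comm, hG, trace_one, Fintype.card_fin]
    exact_mod_cast hr

theorem mul_transpose_eq_add_of_isSymm_of_isIdempotentElem {R : Type*} [CommRing R]
    {P : Matrix n n R} (hP : P.IsSymm) (hP' : IsIdempotentElem P) (E : Matrix m n R) :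
    E * Eᵀ = (E * P) * (E * P)ᵀ + (E - E * P) * (E - E * P)ᵀ := by
  have hPP : P * P = P := hP'
  simp only [transpose_mul, transpose_sub, hP.eq, Matrix.mul_sub, Matrix.sub_mul,
    Matrix.mul_assoc]
  simp only [← Matrix.mul_assoc, hPP]
  abel

theorem diag_mul_transpose_nonneg (A : Matrix m n ℝ) (i : m) : 0 ≤ (A * Aᵀ) i i :=
  dotProduct_self_star_nonneg (A i)

theorem diag_mul_transpose_eq_zero_iff {A : Matrix m n ℝ} {i : m} :
    (A * Aᵀ) i i = 0 ↔ A i = 0 :=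
  dotProduct_self_eq_zero

theorem trace_mul_transpose_self_nonneg [Fintype m] (A : Matrix m n ℝ) :
    0 ≤ (A * Aᵀ).trace :=
  Finset.sum_nonneg fun i _ => diag_mul_transpose_nonneg A i

theorem trace_mul_le_trace_of_isSymm_of_isIdempotentElem [DecidableEq n] {P Q : Matrix n n ℝ}
    (hP : P.IsSymm) (hP' : IsIdempotentElem P) (hQ : Q.IsSymm) (hQ' : IsIdempotentElem Q) :
    (P * Q).trace ≤ P.trace := by
  have hPQ : ((P * (1 - Q)) * (P * (1 - Q))ᵀ).trace = (P * (1 - Q)).trace := by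
    rw [transpose_mul, hP.eq, transpose_sub, transpose_one, hQ.eq, ← Matrix.mul_assoc,
      Matrix.mul_assoc P, hQ'.one_sub.eq, trace_mul_comm, ← Matrix.mul_assoc, hP'.eq]
  have := trace_mul_transpose_self_nonneg (P * (1 - Q))
  rw [hPQ, Matrix.mul_sub, Matrix.mul_one, trace_sub] at this
  linarith

/-- Since `0⁻¹ = 0`, `diagonal σ⁻¹` is the pseudo-inverse of `Z Zᵀ`, so `Zᵀ (diagonal σ⁻¹) Z` is
the orthogonal projection onto the row space of `Z`. -/
theorem sum_inv_mul_diag_le_trace [Fintype m] [DecidableEq m] [DecidableEq n]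
    {Z : Matrix m n ℝ} {σ : m → ℝ} (hZ : Z * Zᵀ = diagonal σ) {P : Matrix n n ℝ}
    (hP : P.IsSymm) (hP' : IsIdempotentElem P) :
    ∑ i, (σ i)⁻¹ * ((Z * P) * (Z * P)ᵀ) i i ≤ P.trace := by
  set M := Zᵀ * diagonal σ⁻¹ * Z
  have hM : M.IsSymm := by simp [M, IsSymm, transpose_mul, Matrix.mul_assoc]
  have hM' : IsIdempotentElem M := by
    have hinv : diagonal σ⁻¹ * diagonal σ * diagonal σ⁻¹ = diagonal σ⁻¹ := by
      rw [diagonal_mul_diagonal, diagonal_mul_diagonal]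
      exact congrArg diagonal (funext fun i => by simpa using mul_inv_mul_cancel (σ i)⁻¹)
    calc M * M = Zᵀ * (diagonal σ⁻¹ * (Z * Zᵀ) * diagonal σ⁻¹) * Z := by
          simp only [M, Matrix.mul_assoc]
      _ = M := by rw [hZ, hinv]
  calc ∑ i, (σ i)⁻¹ * ((Z * P) * (Z * P)ᵀ) i i
      = (diagonal σ⁻¹ * Z * P * Zᵀ).trace := by
        rw [transpose_mul, hP.eq, Matrix.mul_assoc Z, ← Matrix.mul_assoc P, hP'.eq]
        simp [trace, diagonal_mul, Matrix.mul_assoc]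
    _ = (Zᵀ * diagonal σ⁻¹ * Z * P).trace := by
        rw [trace_mul_comm, ← Matrix.mul_assoc, ← Matrix.mul_assoc]
    _ = (P * M).trace := trace_mul_comm _ _
    _ ≤ P.trace := trace_mul_le_trace_of_isSymm_of_isIdempotentElem hP hP' hM hM'

theorem isUnit_det_transpose_mul_self [Fintype m] [DecidableEq n] {X : Matrix m n ℝ}
    (hX : X.rank = Fintype.card n) : IsUnit (Xᵀ * X).det := by
  have hrange : LinearMap.range (Xᵀ * X).mulVecLin = ⊤ := Submodule.eq_top_of_finrank_eq <| by
    rw [Module.finrank_fintype_fun_eq_card]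
    exact (rank_transpose_mul_self X).trans hX
  exact (isUnit_iff_isUnit_det _).1
    (mulVec_surjective_iff_isUnit.1 (LinearMap.range_eq_top.1 hrange))

theorem exists_mul_eq_mul_of_le {R : Type*} [Semiring R] {a b p q : ℕ} (hpq : p ≤ q)
    (A : Matrix (Fin a) (Fin p) R) (B : Matrix (Fin p) (Fin b) R) :
    ∃ (A' : Matrix (Fin a) (Fin q) R) (B' : Matrix (Fin q) (Fin b) R), A' * B' = A * B := by
  let E : Matrix (Fin p) (Fin q) R := (1 : Matrix (Fin q) (Fin q) R).submatrix (Fin.castLE hpq) id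
  have hE : E * Eᵀ = 1 := by
    rw [transpose_submatrix, transpose_one, ← submatrix_mul _ _ _ _ _ Function.bijective_id,
      Matrix.one_mul, submatrix_one _ (Fin.castLE_injective hpq)]
  exact ⟨A * E, Eᵀ * B, by rw [Matrix.mul_assoc, ← Matrix.mul_assoc E, hE, Matrix.one_mul]⟩

theorem rank_mul_mul_le {R k : Type*} [Field R] [Fintype k] {a b c : ℕ}
    (A : Matrix (Fin a) (Fin b) R) (B : Matrix (Fin b) (Fin c) R) (X : Matrix (Fin c) k R) :
    (A * B * X).rank ≤ min c (min b a) :=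
  (rank_mul_le_left _ X).trans <| le_min (rank_le_width _) <|
    le_min ((rank_mul_le_right A B).trans (rank_le_height B))
      ((rank_mul_le_left A B).trans (rank_le_height A))

def diagIndicator {ι : Type*} [DecidableEq ι] (S : Finset ι) : Matrix ι ι ℝ :=
  diagonal fun i => if i ∈ S then 1 else 0

theorem submatrix_castLE_mul_transpose {k m p : ℕ} (V : Matrix (Fin k) (Fin m) ℝ) (hp : p ≤ m) :
    V.submatrix id (Fin.castLE hp) * (V.submatrix id (Fin.castLE hp))ᵀ =
      V * diagIndicator ({i | (i : ℕ) < p} : Finset (Fin m)) * Vᵀ := by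
  have hS : ({i | (i : ℕ) < p} : Finset (Fin m)) = Finset.univ.map (Fin.castLEEmb hp) := by
    ext i
    simp only [Finset.mem_filter, Finset.mem_univ, true_and, Finset.mem_map, Fin.castLEEmb_apply]
    exact ⟨fun h => ⟨⟨i, h⟩, rfl⟩, by rintro ⟨j, rfl⟩; exact j.isLt⟩
  ext a b
  rw [mul_apply, mul_apply]
  simp only [mul_diagonal, diagIndicator, submatrix_apply, transpose_apply, id, mul_ite, mul_one,
    mul_zero, ite_mul, zero_mul]
  rw [Finset.sum_ite_mem, Finset.univ_inter, hS, Finset.sum_map]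
  rfl

end Matrix

structure IsThreshold {ι : Type*} (σ : ι → ℝ) (S : Finset ι) (c : ℝ) : Prop where
  nonneg : 0 ≤ c
  le_of_mem : ∀ i ∈ S, c ≤ σ i
  le_of_notMem : ∀ i ∉ S, σ i ≤ c

section Threshold

open Finset

variable {ι : Type*} [DecidableEq ι] {σ t : ι → ℝ} {S : Finset ι} {c : ℝ}

theorem mul_inv_mul_of_nonneg_of_le {a b : ℝ} (hb : 0 ≤ b) (hba : b ≤ a) :
    a * (a⁻¹ * b) = b := by
  rcases eq_or_ne a 0 with rfl | ha
  · simp [le_antisymm hba hb]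
  · exact mul_inv_cancel_left₀ ha b

/-- With weights `sᵢ = σᵢ⁻¹ tᵢ`, these terms and `c (#S - ∑ sᵢ)` add up to
`∑ i ∈ S, σᵢ - ∑ tᵢ`. -/
def thresholdSlack (σ t : ι → ℝ) (S : Finset ι) (c : ℝ) (i : ι) : ℝ :=
  if i ∈ S then (σ i - c) * (1 - (σ i)⁻¹ * t i) else (c - σ i) * ((σ i)⁻¹ * t i)

theorem IsThreshold.thresholdSlack_nonneg (hS : IsThreshold σ S c) (ht : 0 ≤ t) (htσ : t ≤ σ)
    (i : ι) : 0 ≤ thresholdSlack σ t S c i := by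
  have hs0 : 0 ≤ (σ i)⁻¹ * t i := mul_nonneg (inv_nonneg.2 ((ht i).trans (htσ i))) (ht i)
  have hs1 : (σ i)⁻¹ * t i ≤ 1 := by
    rcases eq_or_ne (σ i) 0 with h | h
    · simp [h]
    · rw [inv_mul_le_iff₀ (lt_of_le_of_ne ((ht i).trans (htσ i)) h.symm), mul_one]
      exact htσ i
  unfold thresholdSlack
  split_ifs with hi
  · exact mul_nonneg (sub_nonneg.2 (hS.le_of_mem i hi)) (sub_nonneg.2 hs1)
  · exact mul_nonneg (sub_nonneg.2 (hS.le_of_notMem i hi)) hs0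

theorem IsThreshold.sum_thresholdSlack_le [Fintype ι] (hS : IsThreshold σ S c) (ht : 0 ≤ t)
    (htσ : t ≤ σ) (hsum : ∑ i, (σ i)⁻¹ * t i ≤ #S) :
    ∑ i, thresholdSlack σ t S c i ≤ ∑ i ∈ S, σ i - ∑ i, t i := by
  have hterm (i : ι) : thresholdSlack σ t S c i = (if i ∈ S then σ i else 0) - t i
      - c * ((if i ∈ S then 1 else 0) - (σ i)⁻¹ * t i) := by
    have := mul_inv_mul_of_nonneg_of_le (ht i) (htσ i)
    unfold thresholdSlack
    split_ifs <;> linear_combination -this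
  simp only [hterm, sum_sub_distrib, ← mul_sum, sum_ite_mem, univ_inter, sum_const, nsmul_one]
  nlinarith [hS.nonneg]

theorem IsThreshold.sum_le [Fintype ι] (hS : IsThreshold σ S c) (ht : 0 ≤ t) (htσ : t ≤ σ)
    (hsum : ∑ i, (σ i)⁻¹ * t i ≤ #S) : ∑ i, t i ≤ ∑ i ∈ S, σ i := by
  have := hS.sum_thresholdSlack_le ht htσ hsum
  have := sum_nonneg fun i (_ : i ∈ univ) => hS.thresholdSlack_nonneg ht htσ i
  linarith

theorem IsThreshold.eq_ite_of_sum_le [Fintype ι] (hS : IsThreshold σ S c)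
    (hc : ∀ i, σ i = c → c = 0) (ht : 0 ≤ t) (htσ : t ≤ σ) (hsum : ∑ i, (σ i)⁻¹ * t i ≤ #S)
    (hle : ∑ i ∈ S, σ i ≤ ∑ i, t i) (i : ι) : t i = if i ∈ S then σ i else 0 := by
  have hslack : thresholdSlack σ t S c i = 0 := by
    have := hS.sum_thresholdSlack_le ht htσ hsum
    exact (sum_eq_zero_iff_of_nonneg fun j _ => hS.thresholdSlack_nonneg ht htσ j).1
      (le_antisymm (by linarith) (sum_nonneg fun j _ => hS.thresholdSlack_nonneg ht htσ j)) i
      (mem_univ i)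
  have hσt := mul_inv_mul_of_nonneg_of_le (ht i) (htσ i)
  unfold thresholdSlack at hslack
  rcases eq_or_ne (σ i) c with h | h
  · have hσ0 : σ i = 0 := h.trans (hc i h)
    have ht0 : t i = 0 := le_antisymm (hσ0 ▸ htσ i) (ht i)
    simp [hσ0, ht0]
  · split_ifs at hslack ⊢ with hi
    · rcases mul_eq_zero.1 hslack with h' | h'
      · exact absurd (sub_eq_zero.1 h') h
      · linear_combination -hσt - σ i * h'
    · rcases mul_eq_zero.1 hslack with h' | h'
      · exact absurd (sub_eq_zero.1 h').symm h
      · linear_combination -hσt + σ i * h'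

end Threshold

section Frobenius

variable {m n : ℕ}

theorem frobSq_eq_trace (M : Matrix (Fin m) (Fin n) ℝ) : frobSq M = (M * Mᵀ).trace := by
  simp [frobSq, trace, mul_apply, sq]

theorem frobSq_eq_sum_diag (M : Matrix (Fin m) (Fin n) ℝ) : frobSq M = ∑ i, (M * Mᵀ) i i :=
  frobSq_eq_trace M

theorem frobSq_nonneg (M : Matrix (Fin m) (Fin n) ℝ) : 0 ≤ frobSq M :=
  frobSq_eq_trace M ▸ trace_mul_transpose_self_nonneg M

theorem frobSq_eq_zero_iff {M : Matrix (Fin m) (Fin n) ℝ} : frobSq M = 0 ↔ M = 0 := by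
  simpa [frobSq_eq_trace] using trace_mul_conjTranspose_self_eq_zero_iff (A := M)

theorem frobSq_neg (M : Matrix (Fin m) (Fin n) ℝ) : frobSq (-M) = frobSq M := by
  simp [frobSq]

theorem frobSq_mul_of_transpose_mul_self_eq_one {Q : Matrix (Fin m) (Fin m) ℝ}
    (hQ : Qᵀ * Q = 1) (M : Matrix (Fin m) (Fin n) ℝ) : frobSq (Q * M) = frobSq M := by
  rw [frobSq_eq_trace, frobSq_eq_trace, transpose_mul, ← Matrix.mul_assoc, trace_mul_comm,
    ← Matrix.mul_assoc, ← Matrix.mul_assoc, hQ, Matrix.one_mul]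

theorem frobSq_eq_add_of_isSymm_of_isIdempotentElem {P : Matrix (Fin n) (Fin n) ℝ}
    (hP : P.IsSymm) (hP' : IsIdempotentElem P) (E : Matrix (Fin m) (Fin n) ℝ) :
    frobSq E = frobSq (E * P) + frobSq (E - E * P) := by
  rw [frobSq_eq_trace, frobSq_eq_trace, frobSq_eq_trace,
    mul_transpose_eq_add_of_isSymm_of_isIdempotentElem hP hP', trace_add]

theorem frobSq_sub_eq_of_mul_eq {P : Matrix (Fin n) (Fin n) ℝ} (hP : P.IsSymm)
    (hP' : IsIdempotentElem P) {C Z : Matrix (Fin m) (Fin n) ℝ} (hCP : C * P = C) :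
    frobSq (C - Z) = frobSq (C - Z * P) + (frobSq Z - frobSq (Z * P)) := by
  have hCZ := frobSq_eq_add_of_isSymm_of_isIdempotentElem hP hP' (C - Z)
  have hZ := frobSq_eq_add_of_isSymm_of_isIdempotentElem hP hP' Z
  rw [Matrix.sub_mul, hCP, show C - Z - (C - Z * P) = -(Z - Z * P) by abel, frobSq_neg] at hCZ
  linarith

end Frobenius

section EckartYoung

open Finset

variable {m n : ℕ} {σ : Fin m → ℝ} {S : Finset (Fin m)} {c : ℝ} {Z C : Matrix (Fin m) (Fin n) ℝ}
  {P : Matrix (Fin n) (Fin n) ℝ}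

theorem diag_eq_add_of_mul_transpose_eq_diagonal (hZ : Z * Zᵀ = diagonal σ) (hP : P.IsSymm)
    (hP' : IsIdempotentElem P) (i : Fin m) :
    σ i = ((Z * P) * (Z * P)ᵀ) i i + ((Z - Z * P) * (Z - Z * P)ᵀ) i i := by
  simpa [hZ] using congrFun (congrFun
    (mul_transpose_eq_add_of_isSymm_of_isIdempotentElem hP hP' Z) i) i

theorem diag_mul_le_of_mul_transpose_eq_diagonal (hZ : Z * Zᵀ = diagonal σ) (hP : P.IsSymm)
    (hP' : IsIdempotentElem P) (i : Fin m) : ((Z * P) * (Z * P)ᵀ) i i ≤ σ i := by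
  linarith [diag_eq_add_of_mul_transpose_eq_diagonal hZ hP hP' i,
    diag_mul_transpose_nonneg (Z - Z * P) i]

theorem frobSq_eq_sum_of_mul_transpose_eq_diagonal (hZ : Z * Zᵀ = diagonal σ) :
    frobSq Z = ∑ i, σ i := by
  rw [frobSq_eq_trace, hZ, trace_diagonal]

theorem frobSq_diagIndicator_mul_sub (hZ : Z * Zᵀ = diagonal σ) :
    frobSq (diagIndicator S * Z - Z) = ∑ i, σ i - ∑ i ∈ S, σ i := by
  have hD : diagIndicator S * Z - Z = diagonal (fun i => if i ∈ S then (0 : ℝ) else -1) * Z := by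
    ext i j
    by_cases hi : i ∈ S <;> simp [diagIndicator, hi]
  rw [hD, frobSq_eq_trace, transpose_mul, diagonal_transpose, Matrix.mul_assoc,
    ← Matrix.mul_assoc Z, hZ, diagonal_mul_diagonal, diagonal_mul_diagonal, trace_diagonal,
    ← univ_inter S, ← sum_ite_mem, ← sum_sub_distrib]
  refine sum_congr rfl fun i _ => ?_
  by_cases hi : i ∈ S <;> simp [hi]

theorem IsThreshold.frobSq_mul_le (hZ : Z * Zᵀ = diagonal σ) (hS : IsThreshold σ S c)
    (hP : P.IsSymm) (hP' : IsIdempotentElem P) (htr : P.trace ≤ #S) :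
    frobSq (Z * P) ≤ ∑ i ∈ S, σ i := by
  rw [frobSq_eq_sum_diag]
  exact hS.sum_le (fun i => diag_mul_transpose_nonneg _ i)
    (diag_mul_le_of_mul_transpose_eq_diagonal hZ hP hP')
    ((sum_inv_mul_diag_le_trace hZ hP hP').trans htr)

theorem IsThreshold.mul_eq_diagIndicator_mul (hZ : Z * Zᵀ = diagonal σ)
    (hS : IsThreshold σ S c) (hc : ∀ i, σ i = c → c = 0) (hP : P.IsSymm)
    (hP' : IsIdempotentElem P) (htr : P.trace ≤ #S) (hle : ∑ i ∈ S, σ i ≤ frobSq (Z * P)) :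
    Z * P = diagIndicator S * Z := by
  rw [frobSq_eq_sum_diag] at hle
  have ht := hS.eq_ite_of_sum_le hc (fun i => diag_mul_transpose_nonneg _ i)
    (diag_mul_le_of_mul_transpose_eq_diagonal hZ hP hP')
    ((sum_inv_mul_diag_le_trace hZ hP hP').trans htr) hle
  ext i j
  have hσ := diag_eq_add_of_mul_transpose_eq_diagonal hZ hP hP' i
  by_cases hi : i ∈ S
  · rw [ht i, if_pos hi, left_eq_add, diag_mul_transpose_eq_zero_iff] at hσ
    simpa [diagIndicator, hi, sub_eq_zero, eq_comm] using congrFun hσ j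
  · have hrow := ht i
    rw [if_neg hi, diag_mul_transpose_eq_zero_iff] at hrow
    simpa [diagIndicator, hi] using congrFun hrow j

theorem IsThreshold.frobSq_diagIndicator_mul_sub_le (hZ : Z * Zᵀ = diagonal σ)
    (hS : IsThreshold σ S c) (hC : C.rank ≤ #S) :
    frobSq (diagIndicator S * Z - Z) ≤ frobSq (C - Z) := by
  obtain ⟨P, hP, hP', hCP, htr⟩ := exists_isSymm_isIdempotentElem_mul_eq_self C
  rw [frobSq_diagIndicator_mul_sub hZ, frobSq_sub_eq_of_mul_eq hP hP' hCP,
    frobSq_eq_sum_of_mul_transpose_eq_diagonal hZ]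
  linarith [frobSq_nonneg (C - Z * P),
    hS.frobSq_mul_le hZ hP hP' (htr.trans (by exact_mod_cast hC))]

theorem IsThreshold.eq_diagIndicator_mul_of_frobSq_sub_le (hZ : Z * Zᵀ = diagonal σ)
    (hS : IsThreshold σ S c) (hc : ∀ i, σ i = c → c = 0) (hC : C.rank ≤ #S)
    (hle : frobSq (C - Z) ≤ frobSq (diagIndicator S * Z - Z)) :
    C = diagIndicator S * Z := by
  obtain ⟨P, hP, hP', hCP, htr⟩ := exists_isSymm_isIdempotentElem_mul_eq_self C
  have htr' : P.trace ≤ #S := htr.trans (by exact_mod_cast hC)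
  rw [frobSq_diagIndicator_mul_sub hZ, frobSq_sub_eq_of_mul_eq hP hP' hCP,
    frobSq_eq_sum_of_mul_transpose_eq_diagonal hZ] at hle
  have hKyFan := hS.frobSq_mul_le hZ hP hP' htr'
  have hCZ : frobSq (C - Z * P) = 0 := le_antisymm (by linarith) (frobSq_nonneg _)
  rw [← hS.mul_eq_diagIndicator_mul hZ hc hP hP' htr' (by linarith [frobSq_nonneg (C - Z * P)])]
  exact sub_eq_zero.1 (frobSq_eq_zero_iff.1 hCZ)

variable {Y : Matrix (Fin m) (Fin n) ℝ} {V : Matrix (Fin m) (Fin m) ℝ}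

theorem mul_transpose_eq_diagonal_of_mul_eq_mul_diagonal (hV : Vᵀ * V = 1)
    (hYV : Y * Yᵀ * V = V * diagonal σ) : (Vᵀ * Y) * (Vᵀ * Y)ᵀ = diagonal σ := by
  rw [transpose_mul, transpose_transpose, Matrix.mul_assoc, ← Matrix.mul_assoc Y, hYV,
    ← Matrix.mul_assoc, hV, Matrix.one_mul]

theorem frobSq_sub_eq_transpose_mul_sub (hV : Vᵀ * V = 1) (M : Matrix (Fin m) (Fin n) ℝ) :
    frobSq (M - Y) = frobSq (Vᵀ * M - Vᵀ * Y) := by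
  rw [← Matrix.mul_sub, frobSq_mul_of_transpose_mul_self_eq_one]
  rw [transpose_transpose, mul_eq_one_comm, hV]

theorem transpose_mul_mul_diagIndicator_mul (hV : Vᵀ * V = 1) :
    Vᵀ * (V * diagIndicator S * Vᵀ * Y) = diagIndicator S * (Vᵀ * Y) := by
  simp only [← Matrix.mul_assoc, hV, Matrix.one_mul]

theorem IsThreshold.frobSq_mul_diagIndicator_mul_sub_le (hV : Vᵀ * V = 1)
    (hYV : Y * Yᵀ * V = V * diagonal σ) (hS : IsThreshold σ S c) (hC : C.rank ≤ #S) :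
    frobSq (V * diagIndicator S * Vᵀ * Y - Y) ≤ frobSq (C - Y) := by
  rw [frobSq_sub_eq_transpose_mul_sub hV C,
    frobSq_sub_eq_transpose_mul_sub hV (V * _ * Vᵀ * Y), transpose_mul_mul_diagIndicator_mul hV]
  exact hS.frobSq_diagIndicator_mul_sub_le
    (mul_transpose_eq_diagonal_of_mul_eq_mul_diagonal hV hYV) ((rank_mul_le_right _ _).trans hC)

theorem IsThreshold.eq_mul_diagIndicator_mul_of_frobSq_sub_le (hV : Vᵀ * V = 1)
    (hYV : Y * Yᵀ * V = V * diagonal σ) (hS : IsThreshold σ S c) (hc : ∀ i, σ i = c → c = 0)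
    (hC : C.rank ≤ #S) (hle : frobSq (C - Y) ≤ frobSq (V * diagIndicator S * Vᵀ * Y - Y)) :
    C = V * diagIndicator S * Vᵀ * Y := by
  rw [frobSq_sub_eq_transpose_mul_sub hV C,
    frobSq_sub_eq_transpose_mul_sub hV (V * _ * Vᵀ * Y), transpose_mul_mul_diagIndicator_mul hV]
    at hle
  have hVC := hS.eq_diagIndicator_mul_of_frobSq_sub_le
    (mul_transpose_eq_diagonal_of_mul_eq_mul_diagonal hV hYV) hc
    ((rank_mul_le_right _ _).trans hC) hle
  rw [← transpose_mul_mul_diagIndicator_mul hV] at hVC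
  simpa [← Matrix.mul_assoc, mul_eq_one_comm.1 hV] using congrArg (V * ·) hVC

end EckartYoung

section Spectrum

variable {m : ℕ} {σ : Fin m → ℝ}

theorem nonneg_of_mul_transpose_eq_diagonal {n : ℕ} {Z : Matrix (Fin m) (Fin n) ℝ}
    (hZ : Z * Zᵀ = diagonal σ) : 0 ≤ σ := fun i => by
  simpa [hZ] using diag_mul_transpose_nonneg Z i

theorem card_ne_zero_eq_rank_of_mul_transpose_eq_diagonal {n : ℕ}
    {Z : Matrix (Fin m) (Fin n) ℝ} (hZ : Z * Zᵀ = diagonal σ) :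
    Fintype.card {i // σ i ≠ 0} = Z.rank := by
  classical
  rw [← rank_self_mul_transpose, hZ, rank_diagonal]

theorem Antitone.eq_zero_of_card_ne_zero_le (hσ : Antitone σ) (h0 : 0 ≤ σ) {p : ℕ}
    (hcard : Fintype.card {i // σ i ≠ 0} ≤ p) {i : Fin m} (hi : p ≤ i) : σ i = 0 := by
  classical
  by_contra hne
  have hsub : Finset.Iic i ⊆ ({j | σ j ≠ 0} : Finset (Fin m)) := fun j hj => by
    simp only [Finset.mem_filter, Finset.mem_univ, true_and]
    exact (lt_of_lt_of_le (lt_of_le_of_ne (h0 i) (Ne.symm hne)) (hσ (Finset.mem_Iic.1 hj))).ne'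
  have := Finset.card_le_card hsub
  rw [Fin.card_Iic, ← Fintype.card_subtype] at this
  omega

theorem Antitone.isThreshold_midpoint (hσ : Antitone σ) (h0 : 0 ≤ σ) {p : ℕ} (h1 : 1 ≤ p)
    (h2 : p < m) (hgap : σ ⟨p, h2⟩ < σ ⟨p - 1, by omega⟩) :
    IsThreshold σ {i | (i : ℕ) < p} ((σ ⟨p, h2⟩ + σ ⟨p - 1, by omega⟩) / 2) ∧
      ∀ i, σ i ≠ (σ ⟨p, h2⟩ + σ ⟨p - 1, by omega⟩) / 2 := by
  have hlow (i : Fin m) (hi : (i : ℕ) < p) : σ ⟨p - 1, by omega⟩ ≤ σ i :=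
    hσ (Fin.mk_le_mk.2 (by omega))
  have hhigh (i : Fin m) (hi : p ≤ (i : ℕ)) : σ i ≤ σ ⟨p, h2⟩ := hσ (Fin.mk_le_mk.2 hi)
  refine ⟨⟨div_nonneg (add_nonneg (h0 _) (h0 _)) zero_le_two, fun i hi => ?_, fun i hi => ?_⟩,
    fun i => ?_⟩
  · linarith [hlow i (by simpa using hi)]
  · linarith [hhigh i (by simpa using hi)]
  · rcases lt_or_ge (i : ℕ) p with hi | hi
    · linarith [hlow i hi]
    · linarith [hhigh i hi]

theorem Antitone.exists_isThreshold (hσ : Antitone σ) {n : ℕ} {Z : Matrix (Fin m) (Fin n) ℝ}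
    (hZ : Z * Zᵀ = diagonal σ) {p : ℕ}
    (h : Z.rank ≤ p ∨ ∃ (h1 : 1 ≤ p) (h2 : p < m), σ ⟨p, h2⟩ < σ ⟨p - 1, by omega⟩) :
    ∃ c, IsThreshold σ {i | (i : ℕ) < p} c ∧ ∀ i, σ i = c → c = 0 := by
  have h0 := nonneg_of_mul_transpose_eq_diagonal hZ
  rcases h with hrank | ⟨h1, h2, hgap⟩
  · refine ⟨0, ⟨le_rfl, fun i _ => h0 i, fun i hi => (hσ.eq_zero_of_card_ne_zero_le h0 ?_
      (not_lt.1 fun h => hi (Finset.mem_filter.2 ⟨Finset.mem_univ i, h⟩))).le⟩, fun _ _ => rfl⟩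
    rwa [card_ne_zero_eq_rank_of_mul_transpose_eq_diagonal hZ]
  · obtain ⟨hS, hne⟩ := hσ.isThreshold_midpoint h0 h1 h2 hgap
    exact ⟨_, hS, fun i h => absurd h (hne i)⟩

end Spectrum

theorem rowsInColPerp_iff_mul_eq_zero {a b c : ℕ} {R : Matrix (Fin a) (Fin b) ℝ}
    {X : Matrix (Fin b) (Fin c) ℝ} : rowsInColPerp R X ↔ R * X = 0 := by
  constructor
  · intro hR
    ext i j
    simpa [mul_apply] using hR i (Xᵀ j) (Submodule.subset_span ⟨j, rfl⟩)
  · intro hRX i v hv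
    induction hv using Submodule.span_induction with
    | mem x hx =>
      obtain ⟨j, rfl⟩ := hx
      simpa [mul_apply] using congrFun (congrFun hRX i) j
    | zero => simp
    | add x y _ _ hx hy => simp [mul_add, Finset.sum_add_distrib, hx, hy]
    | smul r x _ hx => simp [mul_left_comm _ r, ← Finset.mul_sum, hx]

theorem mul_eq_iff_exists_rowsInColPerp {a N d : ℕ} {X : Matrix (Fin d) (Fin N) ℝ}
    (hX : IsUnit (Xᵀ * X).det) (W : Matrix (Fin a) (Fin d) ℝ) (B : Matrix (Fin a) (Fin N) ℝ) :
    W * X = B ↔ ∃ R, rowsInColPerp R X ∧ W = B * (Xᵀ * X)⁻¹ * Xᵀ + R := by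
  have hinv : B * (Xᵀ * X)⁻¹ * Xᵀ * X = B := by
    rw [Matrix.mul_assoc _ Xᵀ, Matrix.mul_assoc, nonsing_inv_mul _ hX, Matrix.mul_one]
  simp only [rowsInColPerp_iff_mul_eq_zero]
  constructor
  · rintro rfl
    exact ⟨_, by rw [Matrix.sub_mul, hinv, sub_self], (add_sub_cancel _ _).symm⟩
  · rintro ⟨R, hR, rfl⟩
    rw [Matrix.add_mul, hR, add_zero, hinv]

/-- Here `σ` is the decreasing list of eigenvalues of `YYᵀ`, `V` an orthogonal matrix of
corresponding eigenvectors, and `U = U_p` consists of the first `p = min(d_x,d_1,d_y)`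
columns of `V`. -/
theorem stmt3
    (N dx dy d1 : ℕ)
    (Xε : Matrix (Fin dx) (Fin N) ℝ) (hXε : Xε.rank = N)
    (Y : Matrix (Fin dy) (Fin N) ℝ)
    (σ : Fin dy → ℝ) (hσ : Antitone σ)
    (V : Matrix (Fin dy) (Fin dy) ℝ) (hV : Vᵀ * V = 1)
    (hAV : Y * Yᵀ * V = V * Matrix.diagonal σ)
    (hgap : Y.rank ≤ min dx (min d1 dy) ∨
      ∃ (h1 : 1 ≤ min dx (min d1 dy)) (h2 : min dx (min d1 dy) < dy),
        σ ⟨min dx (min d1 dy), h2⟩ < σ ⟨min dx (min d1 dy) - 1, by omega⟩)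
    (U : Matrix (Fin dy) (Fin (min dx (min d1 dy))) ℝ)
    (hU : U = V.submatrix id (Fin.castLE ((min_le_right _ _).trans (min_le_right _ _))))
    (W2 : Matrix (Fin dy) (Fin d1) ℝ) (W1 : Matrix (Fin d1) (Fin dx) ℝ) :
    (∀ (W2' : Matrix (Fin dy) (Fin d1) ℝ) (W1' : Matrix (Fin d1) (Fin dx) ℝ),
        frobSq (W2 * W1 * Xε - Y) ≤ frobSq (W2' * W1' * Xε - Y)) ↔
      ∃ R : Matrix (Fin dy) (Fin dx) ℝ, rowsInColPerp R Xε ∧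
        W2 * W1 = U * Uᵀ * Y * (Xεᵀ * Xε)⁻¹ * Xεᵀ + R := by
  set S : Finset (Fin dy) := {i | (i : ℕ) < min dx (min d1 dy)}
  have hX := isUnit_det_transpose_mul_self (hXε.trans (Fintype.card_fin N).symm)
  obtain ⟨c, hS, hc⟩ := hσ.exists_isThreshold
    (mul_transpose_eq_diagonal_of_mul_eq_mul_diagonal hV hAV)
    (hgap.imp_left (rank_mul_le_right _ _).trans)
  have hrank (W2' : Matrix (Fin dy) (Fin d1) ℝ) (W1' : Matrix (Fin d1) (Fin dx) ℝ) :
      (W2' * W1' * Xε).rank ≤ S.card := by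
    rw [Fin.card_filter_val_lt]
    exact (rank_mul_mul_le W2' W1' Xε).trans (by omega)
  have hUY : U * Uᵀ * Y = V * diagIndicator S * Vᵀ * Y := by
    rw [hU, submatrix_castLE_mul_transpose]
  obtain ⟨W2', W1', hW⟩ := exists_mul_eq_mul_of_le ((min_le_right _ _).trans (min_le_left _ _)) U
    (Uᵀ * Y * (Xεᵀ * Xε)⁻¹ * Xεᵀ)
  have hopt : W2' * W1' * Xε = V * diagIndicator S * Vᵀ * Y := hUY ▸
    (mul_eq_iff_exists_rowsInColPerp hX _ _).2
      ⟨0, rowsInColPerp_iff_mul_eq_zero.2 (Matrix.zero_mul _), by simp [hW, Matrix.mul_assoc]⟩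
  rw [← mul_eq_iff_exists_rowsInColPerp hX, hUY]
  exact ⟨fun hmin => hS.eq_mul_diagIndicator_mul_of_frobSq_sub_le hV hAV hc (hrank W2 W1)
      (hopt ▸ hmin W2' W1'),
    fun h W2' W1' => h ▸ hS.frobSq_mul_diagIndicator_mul_sub_le hV hAV (hrank W2' W1')⟩
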